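/- The degree-1 theta constants satisfy the Jacobi identity ϑ₀₀(τ)⁴ = ϑ₀₁(τ)⁴ + ϑ₁₀(τ)⁴ for all τ in the upper half-plane. -/

import Mathlib

open Complex

/-- The theta constant of degree 1 with characteristic `(a, b)`. -/
noncomputable def theta1 (a b : ℤ) (τ : ℂ) : ℂ :=
  ∑' n : ℤ, Complex.exp ((Real.pi : ℂ) * Complex.I *
    (((n : ℂ) + (a : ℂ) / 2) ^ 2 * τ + ((n : ℂ) + (a : ℂ) / 2) * (b : ℂ)))

namespace JacobiAux

noncomputable def f (τ : ℂ) (a b : ℤ) (n : ℤ) : ℂ :=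
  Complex.exp ((Real.pi : ℂ) * Complex.I *
    (((n : ℂ) + (a : ℂ) / 2) ^ 2 * τ + ((n : ℂ) + (a : ℂ) / 2) * (b : ℂ)))

lemma f_eq (τ : ℂ) (a b n : ℤ) : f τ a b n =
    Complex.exp ((Real.pi : ℂ) * Complex.I * ((a : ℂ) ^ 2 / 4 * τ + (a : ℂ) * (b : ℂ) / 2)) *
      jacobiTheta₂_term n (((a : ℂ) * τ + (b : ℂ)) / 2) τ := by
  rw [jacobiTheta₂_term, f, ← Complex.exp_add]
  congr 1
  push_cast
  ring

lemma summable_norm_f {τ : ℂ} (hτ : 0 < τ.im) (a b : ℤ) :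
    Summable fun n : ℤ => ‖f τ a b n‖ := by
  have h2 : Summable fun n : ℤ => ‖jacobiTheta₂_term n (((a : ℂ) * τ + (b : ℂ)) / 2) τ‖ := by
    refine (summable_pow_mul_jacobiTheta₂_term_bound
      |(((a : ℂ) * τ + (b : ℂ)) / 2).im| hτ 0).of_nonneg_of_le
      (fun n => norm_nonneg _) (fun n => ?_)
    simpa only [pow_zero, one_mul] using norm_jacobiTheta₂_term_le hτ le_rfl le_rfl n
  simp only [f_eq, norm_mul]
  exact h2.mul_left _

/-- index type for 4-fold sums -/
abbrev V : Type := (ℤ × ℤ) × (ℤ × ℤ)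

noncomputable def F (τ : ℂ) (a b : ℤ) (p : V) : ℂ :=
  f τ a b p.1.1 * f τ a b p.1.2 * (f τ a b p.2.1 * f τ a b p.2.2)

def S (p : V) : ℤ := p.1.1 + p.1.2 + p.2.1 + p.2.2

noncomputable def N (p : V) : ℂ :=
  (p.1.1 : ℂ) ^ 2 + (p.1.2 : ℂ) ^ 2 + (p.2.1 : ℂ) ^ 2 + (p.2.2 : ℂ) ^ 2

noncomputable def Nh (p : V) : ℂ :=
  ((p.1.1 : ℂ) + 1 / 2) ^ 2 + ((p.1.2 : ℂ) + 1 / 2) ^ 2 +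
    ((p.2.1 : ℂ) + 1 / 2) ^ 2 + ((p.2.2 : ℂ) + 1 / 2) ^ 2

lemma summable_norm_F {τ : ℂ} (hτ : 0 < τ.im) (a b : ℤ) :
    Summable fun p : V => ‖F τ a b p‖ := by
  have h1 : Summable fun q : ℤ × ℤ => ‖f τ a b q.1 * f τ a b q.2‖ := by
    simpa only [norm_mul] using (summable_norm_f hτ a b).mul_of_nonneg
      (summable_norm_f hτ a b) (fun n => norm_nonneg _) (fun n => norm_nonneg _)
  simpa only [F, norm_mul] using h1.mul_of_nonneg h1 (fun q => norm_nonneg _)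
    (fun q => norm_nonneg _)

lemma theta_pow_four {τ : ℂ} (hτ : 0 < τ.im) (a b : ℤ) :
    theta1 a b τ ^ 4 = ∑' p : V, F τ a b p := by
  have hsq : theta1 a b τ ^ 2 = ∑' q : ℤ × ℤ, f τ a b q.1 * f τ a b q.2 := by
    rw [sq]
    exact tsum_mul_tsum_of_summable_norm (summable_norm_f hτ a b) (summable_norm_f hτ a b)
  have hn2 : Summable fun q : ℤ × ℤ => ‖f τ a b q.1 * f τ a b q.2‖ := by
    simpa only [norm_mul] using (summable_norm_f hτ a b).mul_of_nonneg
      (summable_norm_f hτ a b) (fun n => norm_nonneg _) (fun n => norm_nonneg _)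
  calc theta1 a b τ ^ 4 = theta1 a b τ ^ 2 * theta1 a b τ ^ 2 := by ring
    _ = ∑' p : V, F τ a b p := by
        rw [hsq]
        exact tsum_mul_tsum_of_summable_norm hn2 hn2

lemma F00_eq (τ : ℂ) (p : V) :
    F τ 0 0 p = Complex.exp ((Real.pi : ℂ) * Complex.I * (N p * τ)) := by
  simp only [F, f, N, ← Complex.exp_add]
  congr 1
  push_cast
  ring

lemma F01_eq (τ : ℂ) (p : V) :
    F τ 0 1 p = Complex.exp ((Real.pi : ℂ) * Complex.I * (N p * τ)) * (-1 : ℂ) ^ S p := by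
  have : ((S p : ℂ)) * ((Real.pi : ℂ) * Complex.I) =
      (Real.pi : ℂ) * Complex.I * (S p : ℂ) := by ring
  rw [← Complex.exp_pi_mul_I, ← Complex.exp_int_mul, this, ← Complex.exp_add]
  simp only [F, f, N, S, ← Complex.exp_add]
  congr 1
  push_cast
  ring

lemma F10_eq (τ : ℂ) (p : V) :
    F τ 1 0 p = Complex.exp ((Real.pi : ℂ) * Complex.I * (Nh p * τ)) := by
  simp only [F, f, Nh, ← Complex.exp_add]
  congr 1
  push_cast
  ring

noncomputable def G (τ : ℂ) (p : V) : ℂ :=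
  if Odd (S p) then Complex.exp ((Real.pi : ℂ) * Complex.I * (N p * τ)) else 0

noncomputable def H (τ : ℂ) (p : V) : ℂ :=
  if Odd (S p) then Complex.exp ((Real.pi : ℂ) * Complex.I * (Nh p * τ)) else 0

lemma F_sub (τ : ℂ) (p : V) : F τ 0 0 p - F τ 0 1 p = 2 * G τ p := by
  rw [F00_eq, F01_eq, G]
  by_cases h : Odd (S p)
  · rw [if_pos h, h.neg_one_zpow]; ring
  · rw [if_neg h, (Int.not_odd_iff_even.mp h).neg_one_zpow]; ring

/-- the sign-flip involution on the first coordinate -/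
def ψ (p : V) : V := ((-1 - p.1.1, p.1.2), p.2)

lemma ψ_invol : Function.Involutive ψ := by
  intro p
  simp [ψ]

lemma S_ψ (p : V) : S (ψ p) = S p - 1 - 2 * p.1.1 := by
  simp only [S, ψ]; ring

lemma Nh_ψ (p : V) : Nh (ψ p) = Nh p := by
  simp only [Nh, ψ]
  push_cast
  ring

lemma F10_split (τ : ℂ) (p : V) : F τ 1 0 p = H τ p + H τ (ψ p) := by
  have hpar : Odd (S (ψ p)) ↔ ¬ Odd (S p) := by
    rw [S_ψ]
    simp only [Int.odd_iff, Int.not_odd_iff_even, Int.even_iff]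
    omega
  rw [F10_eq, H, H, Nh_ψ]
  by_cases h : Odd (S p)
  · rw [if_pos h, if_neg (by rw [hpar]; exact fun h' => h' h)]; ring
  · rw [if_neg h, if_pos (hpar.mpr h)]; ring

/-- the orthogonal "half-sum" involution (acting on odd-sum vectors) -/
def φ (p : V) : V :=
  if Odd (S p) then
    ((p.1.1 - (S p + 1) / 2, p.1.2 - (S p + 1) / 2),
      (p.2.1 - (S p + 1) / 2, p.2.2 - (S p + 1) / 2))
  else p

lemma φ_odd {a1 a2 a3 a4 c : ℤ} (hc : a1 + a2 + a3 + a4 = 2 * c + 1) :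
    φ ((a1, a2), (a3, a4)) =
      ((a1 - (c + 1), a2 - (c + 1)), (a3 - (c + 1), a4 - (c + 1))) := by
  have h : Odd (S ((a1, a2), (a3, a4))) := ⟨c, by simp only [S]; omega⟩
  have hdiv : (S ((a1, a2), (a3, a4)) + 1) / 2 = c + 1 := by simp only [S]; omega
  unfold φ
  rw [if_pos h, hdiv]

lemma φ_even {p : V} (h : ¬ Odd (S p)) : φ p = p := by
  unfold φ
  rw [if_neg h]

lemma φ_invol : Function.Involutive φ := by
  intro p
  obtain ⟨⟨a1, a2⟩, a3, a4⟩ := p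
  by_cases h : Odd (S ((a1, a2), (a3, a4)))
  · obtain ⟨c, hc⟩ := h
    have hc' : a1 + a2 + a3 + a4 = 2 * c + 1 := by simpa only [S] using hc
    rw [φ_odd hc', φ_odd (c := -c - 2) (by omega)]
    simp only [Prod.mk.injEq]
    refine ⟨⟨by omega, by omega⟩, by omega, by omega⟩
  · rw [φ_even h, φ_even h]

lemma G_eq_H_φ (τ : ℂ) (p : V) : G τ p = H τ (φ p) := by
  obtain ⟨⟨a1, a2⟩, a3, a4⟩ := p
  by_cases h : Odd (S ((a1, a2), (a3, a4)))
  · obtain ⟨c, hc⟩ := h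
    have hc' : a1 + a2 + a3 + a4 = 2 * c + 1 := by simpa only [S] using hc
    rw [φ_odd hc']
    have h1 : Odd (S ((a1, a2), (a3, a4))) := ⟨c, hc⟩
    have h2 : Odd (S ((a1 - (c + 1), a2 - (c + 1)), (a3 - (c + 1), a4 - (c + 1)))) :=
      ⟨-c - 2, by simp only [S]; omega⟩
    have hsum : (a1 : ℂ) + a2 + a3 + a4 = 2 * (c : ℂ) + 1 := by exact_mod_cast hc'
    have hN : Nh ((a1 - (c + 1), a2 - (c + 1)), (a3 - (c + 1), a4 - (c + 1))) =
        N ((a1, a2), (a3, a4)) := by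
      simp only [N, Nh]
      push_cast
      linear_combination (-(2 * (c : ℂ) + 1)) * hsum
    rw [G, H, if_pos h1, if_pos h2, hN]
  · rw [G, H, φ_even h, if_neg h, if_neg h]

lemma norm_H_le (τ : ℂ) (p : V) : ‖H τ p‖ ≤ ‖F τ 1 0 p‖ := by
  rw [H, F10_eq]
  split
  · exact le_rfl
  · simpa using (norm_nonneg _)

lemma summable_H {τ : ℂ} (hτ : 0 < τ.im) : Summable (H τ) := by
  refine Summable.of_norm_bounded ?_ (norm_H_le τ)
  simpa only [F10_eq] using (summable_norm_F hτ 1 0)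

lemma summable_G {τ : ℂ} (hτ : 0 < τ.im) : Summable (G τ) := by
  have : ∀ p : V, ‖G τ p‖ ≤ ‖F τ 0 0 p‖ := by
    intro p
    rw [G, F00_eq]
    split
    · exact le_rfl
    · simpa using (norm_nonneg _)
  exact Summable.of_norm_bounded (summable_norm_F hτ 0 0) this

end JacobiAux

open JacobiAux in
/-- The Jacobi identity `ϑ₀₀⁴ = ϑ₀₁⁴ + ϑ₁₀⁴` for degree-1 theta
constants on the upper half-plane. -/
theorem jacobi_identity (τ : ℂ) (hτ : 0 < τ.im) :
    theta1 0 0 τ ^ 4 = theta1 0 1 τ ^ 4 + theta1 1 0 τ ^ 4 := by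
  have h00 := theta_pow_four hτ 0 0
  have h01 := theta_pow_four hτ 0 1
  have h10 := theta_pow_four hτ 1 0
  have hs00 : Summable (F τ 0 0) := (summable_norm_F hτ 0 0).of_norm
  have hs01 : Summable (F τ 0 1) := (summable_norm_F hτ 0 1).of_norm
  have hG := summable_G hτ
  have hH := summable_H hτ
  have key : theta1 0 0 τ ^ 4 - theta1 0 1 τ ^ 4 = theta1 1 0 τ ^ 4 := by
    rw [h00, h01, h10, ← Summable.tsum_sub hs00 hs01]
    have step1 : ∑' p : V, (F τ 0 0 p - F τ 0 1 p) = 2 * ∑' p : V, G τ p := by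
      rw [← tsum_mul_left]
      exact tsum_congr (F_sub τ)
    have step2 : ∑' p : V, G τ p = ∑' p : V, H τ p := by
      rw [tsum_congr (G_eq_H_φ τ)]
      exact (Function.Involutive.toPerm φ φ_invol).tsum_eq (H τ)
    have step3 : ∑' p : V, F τ 1 0 p = 2 * ∑' p : V, H τ p := by
      have hHψ : Summable fun p : V => H τ (ψ p) := by
        exact hH.comp_injective ψ_invol.injective
      calc ∑' p : V, F τ 1 0 p = ∑' p : V, (H τ p + H τ (ψ p)) := tsum_congr (F10_split τ)
        _ = (∑' p : V, H τ p) + ∑' p : V, H τ (ψ p) := Summable.tsum_add hH hHψ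
        _ = (∑' p : V, H τ p) + ∑' p : V, H τ p := by
            rw [show (∑' p : V, H τ (ψ p)) = ∑' p : V, H τ p from
              (Function.Involutive.toPerm ψ ψ_invol).tsum_eq (H τ)]
        _ = 2 * ∑' p : V, H τ p := by ring
    rw [step1, step2, ← step3]
  linear_combination key
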